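/- The multiplication of groves of planar binary trees is associative, (A × B) × C = A × (B × C) for all groves A, B, C of positive degree, and the grove {1}, where 1 = | ∨ |, is a two-sided neutral element: {1} × A = A = A × {1}. Moreover, if A is a grove of degree n and B a grove of degree m ≥ 1, then A × B is a grove of degree nm. -/

import Mathlib

/-- A planar binary tree: a leaf `|` or a grafting `x ∨ y`. -/
inductive PBT : Type
  | leaf : PBT
  | node : PBT → PBT → PBT
  deriving DecidableEq

namespace PBT

/-- The degree: number of internal vertices. -/
def deg : PBT → ℕ
  | leaf => 0
  | node l r => deg l + deg r + 1

/-- The set `Y n` of planar binary trees of degree `n`. -/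
def Y (n : ℕ) : Set PBT := {t | t.deg = n}

/-- The `over` operation `x / y`. -/
def overOp : PBT → PBT → PBT
  | x, leaf => x
  | x, node yl yr => node (overOp x yl) yr

/-- The `under` operation `x \ y`. -/
def under : PBT → PBT → PBT
  | leaf, y => y
  | node xl xr, y => node xl (under xr y)

/-- The Tamari order, generated by `(x ∨ y) ∨ z ≤ x ∨ (y ∨ z)` and compatibility
with grafting on both sides. -/
inductive tle : PBT → PBT → Prop
  | refl (x : PBT) : tle x x
  | trans {x y z : PBT} : tle x y → tle y z → tle x z
  | rotate (x y z : PBT) : tle (node (node x y) z) (node x (node y z))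
  | node_left {x y : PBT} (z : PBT) : tle x y → tle (node x z) (node y z)
  | node_right {x y : PBT} (z : PBT) : tle x y → tle (node z x) (node z y)

/-- The sum of two planar binary trees: the Tamari interval `[x/y, x\y]`
(a subset of `Y (deg x + deg y)`). -/
def sum (x y : PBT) : Set PBT := {z | tle (overOp x y) z ∧ tle z (under x y)}

/-- A grove of degree `n`: a nonempty subset of `Y n`. -/
def Grove (n : ℕ) (A : Set PBT) : Prop := A.Nonempty ∧ ∀ x ∈ A, x.deg = n

/-- The sum of groves. -/
def gsum (A B : Set PBT) : Set PBT := ⋃ x ∈ A, ⋃ y ∈ B, sum x y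

/-- The reflection involution σ. -/
def σ : PBT → PBT
  | leaf => leaf
  | node l r => node (σ r) (σ l)

/-- The left sum `x ⊣ y` of trees (with the conventions `x ⊣ | = {x}`, `| ⊣ y = {|}`). -/
def lsum : PBT → PBT → Set PBT
  | x, leaf => {x}
  | leaf, _ => {leaf}
  | node xl xr, y => (fun z => node xl z) '' sum xr y

/-- The right sum `x ⊢ y` of trees (with the conventions `| ⊢ y = {y}`, `x ⊢ | = {|}`). -/
def rsum : PBT → PBT → Set PBT
  | leaf, y => {y}
  | _, leaf => {leaf}
  | x, node yl yr => (fun z => node z yr) '' sum x yl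

/-- Left sum of groves. -/
def glsum (A B : Set PBT) : Set PBT := ⋃ x ∈ A, ⋃ y ∈ B, lsum x y

/-- Right sum of groves. -/
def grsum (A B : Set PBT) : Set PBT := ⋃ x ∈ A, ⋃ y ∈ B, rsum x y

/-- Multiplication of a tree by a grove:
`| × B = {|}` and `(xˡ ∨ xʳ) × B = ((xˡ × B) ⊢ B) ⊣ (xʳ × B)`.
(The conventions `{|} ⊢ B = B` and `A ⊣ {|} = A` are built into `rsum`/`lsum`.) -/
def tmul : PBT → Set PBT → Set PBT
  | leaf, _ => {leaf}
  | node l r, B => glsum (grsum (tmul l B) B) (tmul r B)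

/-- Multiplication of groves. -/
def gmul (A B : Set PBT) : Set PBT := ⋃ x ∈ A, tmul x B

end PBT

/-!
For `x = xˡ ∨ xʳ` and `y = yˡ ∨ yʳ`, every tree of the Tamari interval `x + y = [x / y, x \ y]`
has the root splitting either of `x \ y = xˡ ∨ (xʳ \ y)` or of `x / y = (x / yˡ) ∨ yʳ`, so
`x + y = (x ⊣ y) ∪ (x ⊢ y)`. To see this, follow the left spine of `x / y` (and, through the
reflection `σ`, that of `σ (x \ y)`) along a chain of rotations: only these two degrees of the left
subtree are compatible with both bounds. Consequently `⊣` and `⊢` satisfy the three dendriform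
identities and `+` is associative, all by one induction on the degree. By a further induction,
multiplication by a grove `C` without the leaf distributes over `⊣`, `⊢` and `+`, which is exactly
what the recursive definition of `x × (B × C)` needs to agree with `(x × B) × C`.
-/

namespace Set

variable {α β γ δ ε ζ : Type*}

def bind₂ (f : α → β → Set γ) (s : Set α) (t : Set β) : Set γ := ⋃ a ∈ s, ⋃ b ∈ t, f a b

lemma bind₂_biUnion_left {ι : Type*} (f : α → β → Set γ) (S : Set ι) (s : ι → Set α)
    (t : Set β) : bind₂ f (⋃ i ∈ S, s i) t = ⋃ i ∈ S, bind₂ f (s i) t := by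
  simp only [bind₂, biUnion_iUnion]

lemma bind₂_biUnion_right {ι : Type*} (f : α → β → Set γ) (s : Set α) (S : Set ι)
    (t : ι → Set β) : bind₂ f s (⋃ i ∈ S, t i) = ⋃ i ∈ S, bind₂ f s (t i) := by
  ext c
  simp only [bind₂, mem_iUnion, exists_prop]
  grind

lemma bind₂_congr {f g : α → β → Set γ} {s : Set α} {t : Set β}
    (h : ∀ a ∈ s, ∀ b ∈ t, f a b = g a b) : bind₂ f s t = bind₂ g s t :=
  iUnion₂_congr fun a ha => iUnion₂_congr fun b hb => h a ha b hb

lemma bind₂_union_fun (f g : α → β → Set γ) (s : Set α) (t : Set β) :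
    bind₂ (fun a b => f a b ∪ g a b) s t = bind₂ f s t ∪ bind₂ g s t := by
  simp only [bind₂, iUnion_union_distrib]

lemma Nonempty.bind₂ {f : α → β → Set γ} {s : Set α} {t : Set β} (hf : ∀ a b, (f a b).Nonempty)
    (hs : s.Nonempty) (ht : t.Nonempty) : (bind₂ f s t).Nonempty := by
  obtain ⟨a, ha⟩ := hs
  obtain ⟨b, hb⟩ := ht
  obtain ⟨c, hc⟩ := hf a b
  exact ⟨c, mem_biUnion ha (mem_biUnion hb hc)⟩

lemma bind₂_assoc {f : γ → δ → Set ε} {g : α → β → Set γ} {f' : α → ζ → Set ε}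
    {g' : β → δ → Set ζ} (h : ∀ a b c, ⋃ x ∈ g a b, f x c = ⋃ y ∈ g' b c, f' a y)
    (s : Set α) (t : Set β) (u : Set δ) :
    bind₂ f (bind₂ g s t) u = bind₂ f' s (bind₂ g' t u) := by
  ext e
  have h' (a b c) : (∃ x ∈ g a b, e ∈ f x c) ↔ ∃ y ∈ g' b c, e ∈ f' a y := by
    simpa using Set.ext_iff.mp (h a b c) e
  simp only [bind₂, mem_iUnion, exists_prop]
  constructor
  · rintro ⟨x, ⟨a, ha, b, hb, hx⟩, c, hc, he⟩
    obtain ⟨y, hy, he⟩ := (h' a b c).1 ⟨x, hx, he⟩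
    exact ⟨a, ha, y, ⟨b, hb, c, hc, hy⟩, he⟩
  · rintro ⟨a, ha, y, ⟨b, hb, c, hc, hy⟩, he⟩
    obtain ⟨x, hx, he⟩ := (h' a b c).2 ⟨y, hy, he⟩
    exact ⟨x, ⟨a, ha, b, hb, hx⟩, c, hc, he⟩

end Set

namespace PBT

attribute [simp] deg overOp under σ

@[simp] lemma overOp_leaf_left (y : PBT) : overOp leaf y = y := by
  induction y <;> simp_all

@[simp] lemma under_leaf_right (x : PBT) : under x leaf = x := by
  induction x <;> simp_all

@[simp] lemma deg_overOp (x y : PBT) : deg (overOp x y) = deg x + deg y := by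
  induction y <;> simp_all; omega

@[simp] lemma σ_σ (t : PBT) : σ (σ t) = t := by
  induction t <;> simp_all

@[simp] lemma deg_σ (t : PBT) : deg (σ t) = deg t := by
  induction t <;> simp_all; omega

lemma σ_under (x y : PBT) : σ (under x y) = overOp (σ y) (σ x) := by
  induction x <;> simp_all

lemma tle.deg_eq {x y : PBT} (h : tle x y) : deg x = deg y := by
  induction h <;> simp_all; omega

lemma tle.σ_tle_σ {x y : PBT} (h : tle x y) : tle (σ y) (σ x) := by
  induction h with
  | refl => exact .refl _
  | trans _ _ ih₁ ih₂ => exact ih₂.trans ih₁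
  | rotate x y z => exact .rotate (σ z) (σ y) (σ x)
  | node_left z _ ih => exact .node_right _ ih
  | node_right z _ ih => exact .node_left _ ih

lemma tle_σ_iff {x y : PBT} : tle (σ x) (σ y) ↔ tle y x :=
  ⟨fun h => by simpa using h.σ_tle_σ, tle.σ_tle_σ⟩

/-- A rotation `(x ∨ y) ∨ z ↦ x ∨ (y ∨ z)` raises `rightWeight` by `deg x + 1`, so it strictly
increases along the Tamari order. -/
def rightWeight : PBT → ℕ
  | leaf => 0
  | node l r => rightWeight l + rightWeight r + deg r

lemma tle.rightWeight_le {x y : PBT} (h : tle x y) :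
    rightWeight x ≤ rightWeight y ∧ (rightWeight x = rightWeight y → x = y) := by
  induction h with
  | refl => exact ⟨le_rfl, fun _ => rfl⟩
  | trans _ _ ih₁ ih₂ =>
    refine ⟨ih₁.1.trans ih₂.1, fun he => ?_⟩
    rw [ih₁.2 (by omega)]
    exact ih₂.2 (by omega)
  | rotate x y z => simp only [rightWeight, deg]; omega
  | node_left z _ ih =>
    simp only [rightWeight, node.injEq, and_true]
    exact ⟨by omega, fun he => ih.2 (by omega)⟩
  | node_right z h ih =>
    simp only [rightWeight, node.injEq, true_and, h.deg_eq]
    exact ⟨by omega, fun he => ih.2 (by omega)⟩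

theorem tle_antisymm {x y : PBT} (h₁ : tle x y) (h₂ : tle y x) : x = y :=
  h₁.rightWeight_le.2 (le_antisymm h₁.rightWeight_le.1 h₂.rightWeight_le.1)

lemma tle_overOp_node (a b y : PBT) : tle (overOp (node a b) y) (node a (overOp b y)) := by
  induction y with
  | leaf => exact .refl _
  | node c d ihc _ => exact (tle.node_left d ihc).trans (.rotate a (overOp b c) d)

lemma tle_node_under (x c d : PBT) : tle (node (under x c) d) (under x (node c d)) := by
  induction x with
  | leaf => exact .refl _
  | node a b _ ihb => exact (tle.rotate a (under b c) d).trans (.node_right a ihb)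

lemma overOp_tle_under (x y : PBT) : tle (overOp x y) (under x y) := by
  induction x with
  | leaf => simpa using .refl y
  | node a b _ ihb => exact (tle_overOp_node a b y).trans (.node_right a ihb)

lemma sum_nonempty (x y : PBT) : (sum x y).Nonempty :=
  ⟨overOp x y, .refl _, overOp_tle_under x y⟩

lemma deg_of_mem_sum {x y z : PBT} (h : z ∈ sum x y) : deg z = deg x + deg y := by
  simpa using h.1.deg_eq.symm

lemma sum_eq_singleton {x y : PBT} (h : overOp x y = under x y) : sum x y = {overOp x y} := by
  ext z
  refine ⟨fun hz => (tle_antisymm hz.1 (h ▸ hz.2)).symm, ?_⟩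
  rintro rfl
  exact ⟨.refl _, h ▸ .refl _⟩

@[simp] lemma sum_leaf_left (y : PBT) : sum leaf y = {y} := by
  simpa using sum_eq_singleton (x := leaf) (y := y) (by simp)

@[simp] lemma sum_leaf_right (x : PBT) : sum x leaf = {x} := by
  simpa using sum_eq_singleton (x := x) (y := leaf) (by simp)

@[simp] lemma lsum_leaf_left (y : PBT) : lsum leaf y = {leaf} := by
  cases y <;> rfl

@[simp] lemma lsum_node_left (a b y : PBT) : lsum (node a b) y = node a '' sum b y := by
  cases y
  · simp [lsum]
  · rfl

@[simp] lemma rsum_leaf_right (x : PBT) : rsum x leaf = {leaf} := by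
  cases x <;> rfl

@[simp] lemma rsum_node_right (x a b : PBT) : rsum x (node a b) = (node · b) '' sum x a := by
  cases x
  · simp [rsum]
  · rfl

@[simp] lemma lsum_leaf_right (x : PBT) : lsum x leaf = {x} := by
  cases x <;> simp

@[simp] lemma rsum_leaf_left (y : PBT) : rsum leaf y = {y} := by
  cases y <;> simp

/-- `LeftSplit u s r`: `u = (⋯((s ∨ b₁) ∨ b₂) ⋯) ∨ bₖ` and `r = (⋯(b₁ ∨ b₂) ⋯) ∨ bₖ`
for some `k ≥ 1`. -/
inductive LeftSplit : PBT → PBT → PBT → Prop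
  | base (a b : PBT) : LeftSplit (node a b) a b
  | left {a s r : PBT} (b : PBT) : LeftSplit a s r → LeftSplit (node a b) s (node r b)

namespace LeftSplit

lemma deg_lt {u s r : PBT} (h : LeftSplit u s r) : deg s < deg u := by
  induction h <;> simp only [deg] <;> omega

lemma deg_le {a b s r : PBT} (h : LeftSplit (node a b) s r) : deg s ≤ deg a := by
  cases h with
  | base => rfl
  | left _ h => exact h.deg_lt.le

lemma unique {u s r s' r' : PBT} (h : LeftSplit u s r) (h' : LeftSplit u s' r')
    (hd : deg s = deg s') : s = s' ∧ r = r' := by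
  induction h generalizing s' r' with
  | base a b =>
    cases h' with
    | base => exact ⟨rfl, rfl⟩
    | left _ h' => exact absurd hd h'.deg_lt.ne'
  | left b h ih =>
    cases h' with
    | base => exact absurd hd h.deg_lt.ne
    | left _ h' => obtain ⟨rfl, rfl⟩ := ih h' hd; exact ⟨rfl, rfl⟩

lemma overOp_node (a b t : PBT) : LeftSplit (overOp (node a b) t) a (overOp b t) := by
  induction t with
  | leaf => exact .base a b
  | node c d ihc _ => exact ihc.left d

lemma overOp_cases {x y s r : PBT} (h : LeftSplit (overOp x y) s r) :
    (∃ r', LeftSplit x s r') ∨ deg x ≤ deg s := by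
  induction y generalizing s r with
  | leaf => exact .inl ⟨r, h⟩
  | node c d ihc _ =>
    cases h with
    | base => exact .inr (by simp)
    | left _ h => exact ihc h

/-- The left spine of `x / y` passes through `x`, so it has no vertex whose left subtree has
degree strictly between `deg xˡ` and `deg x`. -/
lemma deg_overOp_node_node {xl xr yl yr s r : PBT}
    (h : LeftSplit (overOp (node xl xr) (node yl yr)) s r) :
    deg s ≤ deg xl ∨ deg xl + deg xr + 1 ≤ deg s ∧ deg s ≤ deg xl + deg xr + 1 + deg yl := by
  have hle : deg s ≤ deg xl + deg xr + 1 + deg yl := by simpa using h.deg_le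
  rcases h.overOp_cases with ⟨_, hx⟩ | hx
  · exact .inl hx.deg_le
  · exact .inr ⟨by simpa using hx, hle⟩

end LeftSplit

lemma tle.exists_leftSplit {u v s r : PBT} (h : tle u v) (hv : LeftSplit v s r) :
    ∃ s₀ r₀, LeftSplit u s₀ r₀ ∧ tle s₀ s ∧ tle r₀ r := by
  induction h generalizing s r with
  | refl => exact ⟨s, r, hv, .refl s, .refl r⟩
  | trans _ _ ih₁ ih₂ =>
    obtain ⟨s₁, r₁, h₁, hs₁, hr₁⟩ := ih₂ hv
    obtain ⟨s₀, r₀, h₀, hs₀, hr₀⟩ := ih₁ h₁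
    exact ⟨s₀, r₀, h₀, hs₀.trans hs₁, hr₀.trans hr₁⟩
  | rotate x y z =>
    cases hv with
    | base => exact ⟨x, node y z, .left z (.base x y), .refl x, .refl _⟩
    | left _ hv => exact ⟨s, _, .left z (.left y hv), .refl s, .rotate _ y z⟩
  | node_left z hxy ih =>
    cases hv with
    | base => exact ⟨_, z, .base _ z, hxy, .refl z⟩
    | left _ hv =>
      obtain ⟨s₀, r₀, h₀, hs₀, hr₀⟩ := ih hv
      exact ⟨s₀, node r₀ z, .left z h₀, hs₀, .node_left z hr₀⟩
  | node_right z hxy _ =>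
    cases hv with
    | base => exact ⟨z, _, .base z _, .refl z, hxy⟩
    | left _ hv => exact ⟨s, _, .left _ hv, .refl s, .node_right _ hxy⟩

lemma exists_leftSplit_of_tle_node {u c d : PBT} (h : tle u (node c d)) :
    ∃ s r, LeftSplit u s r ∧ tle s c ∧ tle r d :=
  h.exists_leftSplit (.base c d)

lemma lsum_node_subset_sum (a b y : PBT) : lsum (node a b) y ⊆ sum (node a b) y := by
  rw [lsum_node_left]
  rintro _ ⟨t, ht, rfl⟩
  exact ⟨(tle_overOp_node a b y).trans (.node_right a ht.1), .node_right a ht.2⟩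

lemma rsum_node_subset_sum (x a b : PBT) : rsum x (node a b) ⊆ sum x (node a b) := by
  rw [rsum_node_right]
  rintro _ ⟨t, ht, rfl⟩
  exact ⟨.node_left b ht.1, (tle.node_left b ht.2).trans (tle_node_under x a b)⟩

lemma sum_node_node_subset (xl xr yl yr : PBT) :
    sum (node xl xr) (node yl yr) ⊆
      lsum (node xl xr) (node yl yr) ∪ rsum (node xl xr) (node yl yr) := by
  rintro z ⟨hlo, hhi⟩
  have hdeg := deg_of_mem_sum ⟨hlo, hhi⟩
  obtain ⟨zl, zr, rfl⟩ : ∃ zl zr, z = node zl zr := by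
    cases z with
    | leaf => simp at hdeg
    | node zl zr => exact ⟨zl, zr, rfl⟩
  rw [← tle_σ_iff, σ_under] at hhi
  obtain ⟨s, r, hsr, hs, hr⟩ := exists_leftSplit_of_tle_node hlo
  obtain ⟨s', r', hsr', hs', hr'⟩ := exists_leftSplit_of_tle_node hhi
  have hds := hsr.deg_overOp_node_node
  have hds' := hsr'.deg_overOp_node_node
  simp only [deg, deg_σ, hs.deg_eq, hs'.deg_eq] at hdeg hds hds'
  rcases (by omega : deg zl = deg xl ∨ deg zr = deg yr) with hzl | hzr
  · obtain ⟨rfl, rfl⟩ := hsr.unique (.overOp_node xl xr _) (hs.deg_eq.trans hzl)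
    obtain ⟨rfl, rfl⟩ := hsr'.unique (.base _ _) (by simp [hs'.deg_eq]; omega)
    rw [← σ_under, tle_σ_iff] at hs'
    obtain rfl := tle_antisymm (tle_σ_iff.mp hr') hs
    exact .inl ⟨zr, ⟨hr, hs'⟩, rfl⟩
  · obtain ⟨rfl, rfl⟩ := hsr.unique (.base _ _) (by simp [hs.deg_eq]; omega)
    obtain ⟨rfl, rfl⟩ := hsr'.unique (.overOp_node _ _ _) (hs'.deg_eq.trans (by simpa using hzr))
    rw [← σ_under, tle_σ_iff] at hr'
    obtain rfl := tle_antisymm (tle_σ_iff.mp hs') hr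
    exact .inr ⟨zl, ⟨hs, hr'⟩, rfl⟩

theorem sum_eq_lsum_union_rsum {x y : PBT} (hx : x ≠ leaf) (hy : y ≠ leaf) :
    sum x y = lsum x y ∪ rsum x y := by
  cases x with
  | leaf => exact absurd rfl hx
  | node xl xr =>
    cases y with
    | leaf => exact absurd rfl hy
    | node yl yr =>
      exact (sum_node_node_subset xl xr yl yr).antisymm
        (Set.union_subset (lsum_node_subset_sum _ _ _) (rsum_node_subset_sum _ _ _))

lemma leaf_notMem_sum {x y : PBT} (hx : x ≠ leaf) : leaf ∉ sum x y := by
  intro h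
  have := deg_of_mem_sum h
  cases x with
  | leaf => exact hx rfl
  | node => simp only [deg] at this; omega

lemma biUnion_sum_left {S : Set PBT} {z : PBT} (hS : leaf ∉ S) (hz : z ≠ leaf) :
    ⋃ t ∈ S, sum t z = (⋃ t ∈ S, lsum t z) ∪ ⋃ t ∈ S, rsum t z := by
  simp only [← Set.iUnion_union_distrib]
  exact Set.iUnion₂_congr fun t ht => sum_eq_lsum_union_rsum (ne_of_mem_of_not_mem ht hS) hz

lemma biUnion_sum_right {S : Set PBT} {x : PBT} (hx : x ≠ leaf) (hS : leaf ∉ S) :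
    ⋃ t ∈ S, sum x t = (⋃ t ∈ S, lsum x t) ∪ ⋃ t ∈ S, rsum x t := by
  simp only [← Set.iUnion_union_distrib]
  exact Set.iUnion₂_congr fun t ht => sum_eq_lsum_union_rsum hx (ne_of_mem_of_not_mem ht hS)

lemma lsum_lsum_node {a b y z : PBT}
    (h : ⋃ t ∈ sum b y, sum t z = ⋃ t ∈ sum y z, sum b t) :
    ⋃ t ∈ lsum (node a b) y, lsum t z = ⋃ t ∈ sum y z, lsum (node a b) t := by
  simp only [lsum_node_left, Set.biUnion_image, ← Set.image_iUnion₂, h]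

lemma lsum_rsum (x y z : PBT) : ⋃ t ∈ rsum x y, lsum t z = ⋃ t ∈ lsum y z, rsum x t := by
  cases y with
  | leaf => simp
  | node a b =>
    simp only [rsum_node_right, lsum_node_left, Set.biUnion_image, Set.iUnion_image_left,
      Set.iUnion_image_right node]

lemma rsum_sum_node {x y a b : PBT}
    (h : ⋃ t ∈ sum x y, sum t a = ⋃ t ∈ sum y a, sum x t) :
    ⋃ t ∈ sum x y, rsum t (node a b) = ⋃ t ∈ rsum y (node a b), rsum x t := by
  simp only [rsum_node_right, Set.biUnion_image, ← Set.image_iUnion₂, h]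

theorem sum_assoc (x y z : PBT) : ⋃ t ∈ sum x y, sum t z = ⋃ t ∈ sum y z, sum x t := by
  cases x with
  | leaf => simp
  | node xl xr =>
  cases y with
  | leaf => simp
  | node yl yr =>
  cases z with
  | leaf => simp
  | node zl zr =>
    have h₁ := lsum_lsum_node (a := xl) (sum_assoc xr (node yl yr) (node zl zr))
    have h₃ := rsum_sum_node (b := zr) (sum_assoc (node xl xr) (node yl yr) zl)
    have hx : node xl xr ≠ leaf := nofun
    have hy : node yl yr ≠ leaf := nofun
    have hz : node zl zr ≠ leaf := nofun
    rw [biUnion_sum_left (leaf_notMem_sum hx) hz, h₃, sum_eq_lsum_union_rsum hx hy,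
      Set.biUnion_union, h₁, lsum_rsum, Set.union_assoc, ← Set.biUnion_union,
      ← sum_eq_lsum_union_rsum hy hz, biUnion_sum_right hx (leaf_notMem_sum hy)]
termination_by deg x + deg y + deg z
decreasing_by all_goals simp only [deg]; omega

lemma lsum_lsum (x y z : PBT) : ⋃ t ∈ lsum x y, lsum t z = ⋃ t ∈ sum y z, lsum x t := by
  cases x with
  | leaf => simp [Set.biUnion_const (sum_nonempty y z)]
  | node a b => exact lsum_lsum_node (sum_assoc b y z)

lemma rsum_sum (x y z : PBT) : ⋃ t ∈ sum x y, rsum t z = ⋃ t ∈ rsum y z, rsum x t := by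
  cases z with
  | leaf => simp [Set.biUnion_const (sum_nonempty x y)]
  | node a b => exact rsum_sum_node (sum_assoc x y a)

lemma glsum_glsum (A B C : Set PBT) : glsum (glsum A B) C = glsum A (gsum B C) :=
  Set.bind₂_assoc lsum_lsum A B C

lemma glsum_grsum (A B C : Set PBT) : glsum (grsum A B) C = grsum A (glsum B C) :=
  Set.bind₂_assoc lsum_rsum A B C

lemma grsum_gsum (A B C : Set PBT) : grsum (gsum A B) C = grsum A (grsum B C) :=
  Set.bind₂_assoc rsum_sum A B C

lemma gsum_eq_glsum_union_grsum {A B : Set PBT} (hA : leaf ∉ A) (hB : leaf ∉ B) :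
    gsum A B = glsum A B ∪ grsum A B :=
  (Set.bind₂_congr fun _ hx _ hy =>
    sum_eq_lsum_union_rsum (ne_of_mem_of_not_mem hx hA) (ne_of_mem_of_not_mem hy hB)).trans
    (Set.bind₂_union_fun lsum rsum A B)

lemma glsum_leaf_left {B : Set PBT} (hB : B.Nonempty) : glsum {leaf} B = {leaf} := by
  simp [glsum, Set.biUnion_const hB]

lemma grsum_leaf_right {A : Set PBT} (hA : A.Nonempty) : grsum A {leaf} = {leaf} := by
  simp [grsum, Set.biUnion_const hA]

lemma leaf_notMem_lsum {x : PBT} (hx : x ≠ leaf) (y : PBT) : leaf ∉ lsum x y := by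
  cases x <;> simp_all

lemma leaf_notMem_rsum (x : PBT) {y : PBT} (hy : y ≠ leaf) : leaf ∉ rsum x y := by
  cases y <;> simp_all

lemma leaf_notMem_glsum {A : Set PBT} (hA : leaf ∉ A) (B : Set PBT) : leaf ∉ glsum A B := by
  simp only [glsum, Set.mem_iUnion, not_exists]
  exact fun x hx y _ => leaf_notMem_lsum (ne_of_mem_of_not_mem hx hA) y

lemma leaf_notMem_grsum (A : Set PBT) {B : Set PBT} (hB : leaf ∉ B) : leaf ∉ grsum A B := by
  simp only [grsum, Set.mem_iUnion, not_exists]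
  exact fun x _ y hy => leaf_notMem_rsum x (ne_of_mem_of_not_mem hy hB)

@[simp] lemma tmul_leaf (B : Set PBT) : tmul leaf B = {leaf} := rfl

lemma lsum_nonempty (x y : PBT) : (lsum x y).Nonempty := by
  cases x <;> simp [sum_nonempty]

lemma rsum_nonempty (x y : PBT) : (rsum x y).Nonempty := by
  cases y <;> simp [sum_nonempty]

lemma tmul_nonempty {B : Set PBT} (hB : B.Nonempty) (x : PBT) : (tmul x B).Nonempty := by
  induction x with
  | leaf => exact Set.singleton_nonempty leaf
  | node l r ihl ihr => exact .bind₂ lsum_nonempty (.bind₂ rsum_nonempty ihl hB) ihr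

lemma leaf_notMem_tmul {B : Set PBT} (hB : leaf ∉ B) (l r : PBT) : leaf ∉ tmul (node l r) B :=
  leaf_notMem_glsum (leaf_notMem_grsum _ hB) _

lemma gmul_image (f : PBT → PBT) (S C : Set PBT) : gmul (f '' S) C = ⋃ t ∈ S, tmul (f t) C :=
  Set.biUnion_image

@[simp] lemma gsum_leaf_left (B : Set PBT) : gsum {leaf} B = B := by
  simp [gsum]

@[simp] lemma gsum_leaf_right (A : Set PBT) : gsum A {leaf} = A := by
  simp [gsum]

@[simp] lemma gmul_singleton (x : PBT) (B : Set PBT) : gmul {x} B = tmul x B := by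
  simp [gmul]

lemma gmul_union (A A' C : Set PBT) : gmul (A ∪ A') C = gmul A C ∪ gmul A' C :=
  Set.biUnion_union A A' _

section Distributivity

variable {C : Set PBT}

lemma gmul_lsum_node (a b y : PBT) (h : gmul (sum b y) C = gsum (tmul b C) (tmul y C)) :
    gmul (lsum (node a b) y) C = glsum (tmul (node a b) C) (tmul y C) :=
  calc gmul (lsum (node a b) y) C
      = ⋃ t ∈ sum b y, glsum (grsum (tmul a C) C) (tmul t C) := by
        rw [lsum_node_left, gmul_image]; rfl
    _ = glsum (grsum (tmul a C) C) (gmul (sum b y) C) :=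
        (Set.bind₂_biUnion_right _ _ _ _).symm
    _ = glsum (tmul (node a b) C) (tmul y C) := by rw [h, ← glsum_glsum]; rfl

lemma gmul_rsum_node (x a b : PBT) (h : gmul (sum x a) C = gsum (tmul x C) (tmul a C)) :
    gmul (rsum x (node a b)) C = grsum (tmul x C) (tmul (node a b) C) :=
  calc gmul (rsum x (node a b)) C
      = ⋃ t ∈ sum x a, glsum (grsum (tmul t C) C) (tmul b C) := by
        rw [rsum_node_right, gmul_image]; rfl
    _ = glsum (⋃ t ∈ sum x a, grsum (tmul t C) C) (tmul b C) :=
        (Set.bind₂_biUnion_left _ _ _ _).symm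
    _ = glsum (grsum (gmul (sum x a) C) C) (tmul b C) :=
        congrArg (glsum · _) (Set.bind₂_biUnion_left _ _ _ _).symm
    _ = grsum (tmul x C) (tmul (node a b) C) := by rw [h, grsum_gsum, glsum_grsum]; rfl

lemma gmul_sum (hC : leaf ∉ C) (x y : PBT) : gmul (sum x y) C = gsum (tmul x C) (tmul y C) := by
  cases x with
  | leaf => simp
  | node xl xr =>
  cases y with
  | leaf => simp
  | node yl yr =>
    rw [sum_eq_lsum_union_rsum (by simp) (by simp), gmul_union,
      gmul_lsum_node _ _ _ (gmul_sum hC xr _), gmul_rsum_node _ _ _ (gmul_sum hC _ yl),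
      gsum_eq_glsum_union_grsum (leaf_notMem_tmul hC _ _) (leaf_notMem_tmul hC _ _)]
termination_by deg x + deg y
decreasing_by all_goals simp only [deg]; omega

lemma gmul_lsum (hC : C.Nonempty) (hC' : leaf ∉ C) (x y : PBT) :
    gmul (lsum x y) C = glsum (tmul x C) (tmul y C) := by
  cases x with
  | leaf => simp [glsum_leaf_left (tmul_nonempty hC y)]
  | node a b => exact gmul_lsum_node a b y (gmul_sum hC' b y)

lemma gmul_rsum (hC : C.Nonempty) (hC' : leaf ∉ C) (x y : PBT) :
    gmul (rsum x y) C = grsum (tmul x C) (tmul y C) := by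
  cases y with
  | leaf => simp [grsum_leaf_right (tmul_nonempty hC x)]
  | node a b => exact gmul_rsum_node x a b (gmul_sum hC' x a)

lemma gmul_bind₂ {f g : PBT → PBT → Set PBT}
    (h : ∀ x y, gmul (f x y) C = Set.bind₂ g (tmul x C) (tmul y C)) (A A' : Set PBT) :
    gmul (Set.bind₂ f A A') C = Set.bind₂ g (gmul A C) (gmul A' C) := by
  calc gmul (Set.bind₂ f A A') C = ⋃ x ∈ A, ⋃ y ∈ A', gmul (f x y) C := by
        simp only [gmul, Set.bind₂, Set.biUnion_iUnion]
    _ = Set.bind₂ g (gmul A C) (gmul A' C) := by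
        simp only [h]
        unfold gmul
        rw [Set.bind₂_biUnion_left]
        simp only [Set.bind₂_biUnion_right]

end Distributivity

section Associativity

variable {C : Set PBT}

lemma gmul_glsum (hC : C.Nonempty) (hC' : leaf ∉ C) (A A' : Set PBT) :
    gmul (glsum A A') C = glsum (gmul A C) (gmul A' C) :=
  gmul_bind₂ (gmul_lsum hC hC') A A'

lemma gmul_grsum (hC : C.Nonempty) (hC' : leaf ∉ C) (A A' : Set PBT) :
    gmul (grsum A A') C = grsum (gmul A C) (gmul A' C) :=
  gmul_bind₂ (gmul_rsum hC hC') A A'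

lemma gmul_tmul (hC : C.Nonempty) (hC' : leaf ∉ C) (B : Set PBT) (x : PBT) :
    gmul (tmul x B) C = tmul x (gmul B C) := by
  induction x with
  | leaf => simp
  | node l r ihl ihr =>
    simp only [tmul]
    rw [gmul_glsum hC hC', gmul_grsum hC hC', ihl, ihr]

theorem gmul_assoc (hC : C.Nonempty) (hC' : leaf ∉ C) (A B : Set PBT) :
    gmul (gmul A B) C = gmul A (gmul B C) :=
  calc gmul (gmul A B) C = ⋃ x ∈ A, gmul (tmul x B) C := by
        simp only [gmul, Set.biUnion_iUnion]
    _ = gmul A (gmul B C) := Set.iUnion₂_congr fun x _ => gmul_tmul hC hC' B x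

end Associativity

lemma tmul_one_right (x : PBT) : tmul x {node leaf leaf} = {x} := by
  induction x with
  | leaf => rfl
  | node l r ihl ihr => simp [tmul, ihl, ihr, glsum, grsum]

theorem gmul_one_left (A : Set PBT) : gmul {node leaf leaf} A = A := by
  simp [tmul, glsum, grsum]

theorem gmul_one_right (A : Set PBT) : gmul A {node leaf leaf} = A := by
  simp [gmul, tmul_one_right]

lemma deg_of_mem_lsum {x y t : PBT} (hx : x ≠ leaf) (ht : t ∈ lsum x y) :
    deg t = deg x + deg y := by
  cases x with
  | leaf => exact absurd rfl hx
  | node a b =>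
    rw [lsum_node_left] at ht
    obtain ⟨u, hu, rfl⟩ := ht
    simp [deg_of_mem_sum hu]; omega

lemma deg_of_mem_rsum {x y t : PBT} (hy : y ≠ leaf) (ht : t ∈ rsum x y) :
    deg t = deg x + deg y := by
  cases y with
  | leaf => exact absurd rfl hy
  | node a b =>
    rw [rsum_node_right] at ht
    obtain ⟨u, hu, rfl⟩ := ht
    simp [deg_of_mem_sum hu]; omega

lemma deg_of_mem_tmul {m : ℕ} (hm : 1 ≤ m) {B : Set PBT} (hB : ∀ y ∈ B, deg y = m) {x t : PBT}
    (ht : t ∈ tmul x B) : deg t = deg x * m := by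
  induction x generalizing t with
  | leaf => simp_all
  | node l r ihl ihr =>
    simp only [tmul, glsum, grsum, Set.mem_iUnion, exists_prop] at ht
    obtain ⟨u, ⟨w, hw, y, hy, hu⟩, v, hv, ht⟩ := ht
    have hy' : y ≠ leaf := by rintro rfl; have := hB leaf hy; simp only [deg] at this; omega
    have hdu := deg_of_mem_rsum hy' hu
    have hu' : u ≠ leaf := by rintro rfl; rw [hB y hy] at hdu; simp only [deg] at hdu; omega
    rw [deg_of_mem_lsum hu' ht, hdu, ihl hw, ihr hv, hB y hy]
    simp only [deg]; ring

lemma Grove.leaf_notMem {n : ℕ} {A : Set PBT} (hA : Grove n A) (hn : 0 < n) : leaf ∉ A :=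
  fun h => by simpa [hn.ne] using hA.2 leaf h

theorem Grove.gmul {n m : ℕ} {A B : Set PBT} (hm : 1 ≤ m) (hA : Grove n A) (hB : Grove m B) :
    Grove (n * m) (gmul A B) := by
  obtain ⟨x, hx⟩ := hA.1
  obtain ⟨t, ht⟩ := tmul_nonempty hB.1 x
  refine ⟨⟨t, Set.mem_biUnion hx ht⟩, fun t ht => ?_⟩
  obtain ⟨x, hx, ht⟩ := Set.mem_iUnion₂.mp ht
  rw [deg_of_mem_tmul hm hB.2 ht, hA.2 x hx]

end PBT

open PBT in
/-- multiplication of groves is associative, `{1}` (where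
`1 = | ∨ |`) is a two-sided neutral element, and the product of a grove of
degree `n` with a grove of degree `m ≥ 1` is a grove of degree `n * m`. -/
theorem gmul_monoid :
    (∀ n m p : ℕ, 0 < n → 0 < m → 0 < p → ∀ A B C : Set PBT,
      Grove n A → Grove m B → Grove p C →
      gmul (gmul A B) C = gmul A (gmul B C)) ∧
    (∀ n : ℕ, ∀ A : Set PBT, Grove n A →
      gmul {node PBT.leaf PBT.leaf} A = A ∧ gmul A {node PBT.leaf PBT.leaf} = A) ∧
    (∀ n m : ℕ, 1 ≤ m → ∀ A B : Set PBT, Grove n A → Grove m B →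
      Grove (n * m) (gmul A B)) :=
  ⟨fun _ _ _ _ _ hp A B _ _ _ hC => gmul_assoc hC.1 (hC.leaf_notMem hp) A B,
    fun _ A _ => ⟨gmul_one_left A, gmul_one_right A⟩,
    fun _ _ hm _ _ hA hB => hA.gmul hm hB⟩
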